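/- arXiv:math/0702593 — 3 statements merged into one kernel-verified Lean document; each statement's English description precedes it below -/
import Mathlib

section
/- Let K be a field complete with respect to a nontrivial non-archimedean absolute value, with valuation ring R a discrete valuation ring. Let φ = Σ_{i≥1} c_i X^i ∈ K⟦X⟧ be a formal power series with zero constant term such that |c₁| ≤ 1 (i.e. φ'(0) ∈ R). If r ∈ (0,1] is a radius at which the graph of φ is analytically trivialized, then for every real number s with 0 < s < r one has |c_i| s^i → 0 as i → ∞; in other words, the radius of convergence of φ is at least r. (This is Proposition 3.6, part 1: the radius of convergence of φ is at least the size of its graph with respect to the model 𝔸²_R.) -/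
/-!
Restricting a trivialization `f = (f₁, f₂)` to the line `X₂ = 0` gives series `ψ = f₁(T, 0)` and
`χ = f₂(T, 0) = φ(ψ)` whose coefficients satisfy `‖·‖ rⁿ ≤ r`. Since `χ'(0) = φ'(0) ψ'(0)`, the
Jacobian determinant factors as `ψ'(0) (∂₂f₂(0) - ∂₂f₁(0) φ'(0))`, so `‖ψ'(0)‖ = 1`. Then the
coefficient identity `φₙ ψ'(0)ⁿ = χₙ - ∑_{k<n} φₖ (ψᵏ)ₙ` and the ultrametric inequality give
`‖φₙ‖ rⁿ ≤ r` by strong induction on `n`, and the coefficients of `φ` decay geometrically at any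
radius `s < r`.
-/

noncomputable section

open Filter PowerSeries

namespace NA

/-- The valuation ring `R = {x : K | ‖x‖ ≤ 1}` of a nonarchimedean normed field. -/
def integers (K : Type*) [NormedField K] [IsUltrametricDist K] : Subring K where
  carrier := {x : K | ‖x‖ ≤ 1}
  mul_mem' {a b} ha hb := by
    simp only [Set.mem_setOf_eq, norm_mul] at *
    calc ‖a‖ * ‖b‖ ≤ 1 * 1 := mul_le_mul ha hb (norm_nonneg _) zero_le_one
    _ = 1 := one_mul 1
  one_mem' := by simp
  add_mem' {a b} ha hb := (IsUltrametricDist.norm_add_le_max a b).trans (max_le ha hb)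
  zero_mem' := by simp
  neg_mem' {a} ha := by simpa using ha

/-- Composition `φ ∘ ψ` of formal power series in one variable
(this gives `φ(ψ)` whenever `ψ` has zero constant term). -/
def comp {K : Type*} [CommSemiring K] (φ ψ : PowerSeries K) : PowerSeries K :=
  PowerSeries.mk fun n =>
    ∑ k ∈ Finset.range (n + 1), PowerSeries.coeff k φ * PowerSeries.coeff n (ψ ^ k)

/-- The one-variable series `T ↦ f(T, 0)` obtained from a two-variable series `f`. -/
def line1 {K : Type*} [CommSemiring K] (f : MvPowerSeries (Fin 2) K) : PowerSeries K :=
  PowerSeries.mk fun n => MvPowerSeries.coeff (Finsupp.single (0 : Fin 2) n) f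

/-- The statement `‖f‖_r ≤ c`, where `‖f‖_r = sup_I ‖a_I‖ r^{|I|}` is the Gauss norm of the
multivariate formal power series `f = Σ_I a_I X^I`. -/
def NormLE {K : Type*} [NormedField K] {N : ℕ} (r : ℝ) (f : MvPowerSeries (Fin N) K)
    (c : ℝ) : Prop :=
  ∀ I : Fin N →₀ ℕ, ‖MvPowerSeries.coeff I f‖ * r ^ (∑ j, I j) ≤ c

/-- The graph of `φ` is analytically trivialized at radius `r`: there is a pair
`f = (f₁, f₂)` of two-variable power series, vanishing at the origin, with `‖f_j‖_r ≤ r`,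
whose Jacobian matrix at the origin lies in `GL₂(R)` (entries of norm `≤ 1`, determinant of
norm `1`), and such that `f₂(T,0) = φ(f₁(T,0))`. -/
def GraphTrivAt {K : Type*} [NormedField K] (φ : PowerSeries K) (r : ℝ) : Prop :=
  ∃ f₁ f₂ : MvPowerSeries (Fin 2) K,
    MvPowerSeries.constantCoeff f₁ = 0 ∧
    MvPowerSeries.constantCoeff f₂ = 0 ∧
    NormLE r f₁ r ∧ NormLE r f₂ r ∧
    ‖MvPowerSeries.coeff (Finsupp.single (0 : Fin 2) 1) f₁‖ ≤ 1 ∧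
    ‖MvPowerSeries.coeff (Finsupp.single (1 : Fin 2) 1) f₁‖ ≤ 1 ∧
    ‖MvPowerSeries.coeff (Finsupp.single (0 : Fin 2) 1) f₂‖ ≤ 1 ∧
    ‖MvPowerSeries.coeff (Finsupp.single (1 : Fin 2) 1) f₂‖ ≤ 1 ∧
    ‖MvPowerSeries.coeff (Finsupp.single (0 : Fin 2) 1) f₁ *
        MvPowerSeries.coeff (Finsupp.single (1 : Fin 2) 1) f₂ -
      MvPowerSeries.coeff (Finsupp.single (1 : Fin 2) 1) f₁ *
        MvPowerSeries.coeff (Finsupp.single (0 : Fin 2) 1) f₂‖ = 1 ∧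
    line1 f₂ = comp φ (line1 f₁)

end NA

open Finset Topology

theorem IsUltrametricDist.norm_sub_le_max {S : Type*} [SeminormedAddGroup S] [IsUltrametricDist S]
    (x y : S) : ‖x - y‖ ≤ max ‖x‖ ‖y‖ := by
  simpa only [sub_eq_add_neg, norm_neg] using norm_add_le_max x (-y)

namespace PowerSeries

section CommSemiring

variable {R : Type*} [CommSemiring R] {ψ : R⟦X⟧}

theorem coeff_self_pow (hψ : constantCoeff ψ = 0) (k : ℕ) : coeff k (ψ ^ k) = coeff 1 ψ ^ k := by
  obtain ⟨ψ, rfl⟩ := X_dvd_iff.mpr hψ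
  rw [mul_pow, coeff_X_pow_mul', if_pos le_rfl, Nat.sub_self, coeff_zero_eq_constantCoeff,
    map_pow, ← coeff_zero_eq_constantCoeff_apply, ← coeff_succ_X_mul]

end CommSemiring

section Ultrametric

variable {K : Type*} [SeminormedRing K] [IsUltrametricDist K]

theorem norm_sum_mul_le {ι : Type*} {s : Finset ι} {f : ι → K} {c C : ℝ} (hc : 0 < c)
    (hC : 0 ≤ C) (hf : ∀ i ∈ s, ‖f i‖ * c ≤ C) : ‖∑ i ∈ s, f i‖ * c ≤ C := by
  rw [← le_div_iff₀ hc]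
  exact IsUltrametricDist.norm_sum_le_of_forall_le_of_nonneg (div_nonneg hC hc.le)
    fun i hi => (le_div_iff₀ hc).mpr (hf i hi)

theorem norm_coeff_mul_mul_pow_le {φ ψ : K⟦X⟧} {r a b : ℝ} (hr : 0 < r)
    (hφ : ∀ n, ‖coeff n φ‖ * r ^ n ≤ a) (hψ : ∀ n, ‖coeff n ψ‖ * r ^ n ≤ b) (n : ℕ) :
    ‖coeff n (φ * ψ)‖ * r ^ n ≤ a * b := by
  have ha : 0 ≤ a := (by positivity : 0 ≤ ‖coeff 0 φ‖ * r ^ 0).trans (hφ 0)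
  have hb : 0 ≤ b := (by positivity : 0 ≤ ‖coeff 0 ψ‖ * r ^ 0).trans (hψ 0)
  rw [coeff_mul]
  refine norm_sum_mul_le (pow_pos hr n) (mul_nonneg ha hb) fun p hp => ?_
  rw [← mem_antidiagonal.mp hp, pow_add]
  calc ‖coeff p.1 φ * coeff p.2 ψ‖ * (r ^ p.1 * r ^ p.2)
      ≤ ‖coeff p.1 φ‖ * r ^ p.1 * (‖coeff p.2 ψ‖ * r ^ p.2) := by
        rw [mul_mul_mul_comm]
        gcongr
        exact norm_mul_le _ _
    _ ≤ a * b := mul_le_mul (hφ _) (hψ _) (by positivity) ha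

theorem norm_coeff_pow_mul_pow_le [NormOneClass K] {ψ : K⟦X⟧} {r a : ℝ} (hr : 0 < r)
    (hψ : ∀ n, ‖coeff n ψ‖ * r ^ n ≤ a) (k n : ℕ) : ‖coeff n (ψ ^ k)‖ * r ^ n ≤ a ^ k := by
  induction k generalizing n with
  | zero =>
    rw [pow_zero, pow_zero, coeff_one]
    split_ifs with hn
    · simp [hn]
    · simp
  | succ k ih =>
    rw [pow_succ, pow_succ]
    exact norm_coeff_mul_mul_pow_le hr ih hψ n

end Ultrametric

theorem tendsto_norm_coeff_mul_pow {K : Type*} [SeminormedRing K] {φ : K⟦X⟧} {r s C : ℝ}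
    (hs : 0 ≤ s) (hsr : s < r) (hφ : ∀ n, ‖coeff n φ‖ * r ^ n ≤ C) :
    Tendsto (fun n => ‖coeff n φ‖ * s ^ n) atTop (𝓝 0) := by
  have hr : 0 < r := hs.trans_lt hsr
  have hgeom := (tendsto_pow_atTop_nhds_zero_of_lt_one (div_nonneg hs hr.le)
    ((div_lt_one hr).mpr hsr)).const_mul C
  rw [mul_zero] at hgeom
  refine squeeze_zero (fun n => by positivity) (fun n => ?_) hgeom
  calc ‖coeff n φ‖ * s ^ n = ‖coeff n φ‖ * r ^ n * (s / r) ^ n := by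
        rw [div_pow, mul_assoc, mul_div_cancel₀ _ (pow_ne_zero n hr.ne')]
    _ ≤ C * (s / r) ^ n := by gcongr; exact hφ n

end PowerSeries

namespace NA

section CommSemiring

variable {K : Type*} [CommSemiring K]

theorem coeff_comp (φ ψ : K⟦X⟧) (n : ℕ) :
    coeff n (comp φ ψ) = ∑ k ∈ range (n + 1), coeff k φ * coeff n (ψ ^ k) :=
  coeff_mk _ _

theorem coeff_comp_eq_add {ψ : K⟦X⟧} (φ : K⟦X⟧) (hψ : constantCoeff ψ = 0) (n : ℕ) :
    coeff n (comp φ ψ) =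
      ∑ k ∈ range n, coeff k φ * coeff n (ψ ^ k) + coeff n φ * coeff 1 ψ ^ n := by
  rw [coeff_comp, sum_range_succ, coeff_self_pow hψ]

theorem coeff_one_comp {ψ : K⟦X⟧} (φ : K⟦X⟧) (hψ : constantCoeff ψ = 0) :
    coeff 1 (comp φ ψ) = coeff 1 φ * coeff 1 ψ := by
  simp [coeff_comp_eq_add φ hψ]

@[simp]
theorem coeff_line1 (f : MvPowerSeries (Fin 2) K) (n : ℕ) :
    coeff n (line1 f) = MvPowerSeries.coeff (Finsupp.single 0 n) f :=
  coeff_mk _ _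

theorem constantCoeff_line1 (f : MvPowerSeries (Fin 2) K) :
    constantCoeff (line1 f) = MvPowerSeries.constantCoeff f := by
  rw [← coeff_zero_eq_constantCoeff_apply, coeff_line1, Finsupp.single_zero,
    MvPowerSeries.coeff_zero_eq_constantCoeff_apply]

end CommSemiring

theorem norm_coeff_line1_mul_pow_le {K : Type*} [NormedField K] {f : MvPowerSeries (Fin 2) K}
    {r c : ℝ} (hf : NormLE r f c) (n : ℕ) : ‖coeff n (line1 f)‖ * r ^ n ≤ c := by
  simpa [Fin.sum_univ_two] using hf (Finsupp.single 0 n)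

section Ultrametric

variable {K : Type*} [NormedField K] [IsUltrametricDist K]

theorem norm_eq_one_of_norm_det_eq_one {a b d e : K} (ha : ‖a‖ ≤ 1) (hb : ‖b‖ ≤ 1)
    (hd : ‖d‖ ≤ 1) (he : ‖e‖ ≤ 1) (hdet : ‖a * d - b * (e * a)‖ = 1) : ‖a‖ = 1 := by
  have hbe : ‖b * e‖ ≤ 1 := by
    rw [norm_mul]
    exact mul_le_one₀ hb (norm_nonneg e) he
  have hfactor : ‖d - b * e‖ ≤ 1 := (IsUltrametricDist.norm_sub_le_max d _).trans (max_le hd hbe)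
  refine le_antisymm ha ?_
  calc 1 = ‖a‖ * ‖d - b * e‖ := by rw [← hdet, ← norm_mul]; ring_nf
    _ ≤ ‖a‖ := mul_le_of_le_one_right (norm_nonneg a) hfactor

theorem norm_coeff_mul_pow_le_of_comp {φ ψ : K⟦X⟧} {r C : ℝ} (hr : 0 < r)
    (hψ0 : constantCoeff ψ = 0) (hψ1 : ‖coeff 1 ψ‖ = 1) (hψ : ∀ n, ‖coeff n ψ‖ * r ^ n ≤ r)
    (hχ : ∀ n, ‖coeff n (comp φ ψ)‖ * r ^ n ≤ C) (n : ℕ) : ‖coeff n φ‖ * r ^ n ≤ C := by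
  have hC : 0 ≤ C := (by positivity : 0 ≤ ‖coeff 0 (comp φ ψ)‖ * r ^ 0).trans (hχ 0)
  induction n using Nat.strong_induction_on with
  | _ n ih =>
    have hsolve : coeff n φ * coeff 1 ψ ^ n =
        coeff n (comp φ ψ) - ∑ k ∈ range n, coeff k φ * coeff n (ψ ^ k) := by
      rw [coeff_comp_eq_add φ hψ0]
      ring
    have hlower : ‖∑ k ∈ range n, coeff k φ * coeff n (ψ ^ k)‖ * r ^ n ≤ C := by
      refine norm_sum_mul_le (pow_pos hr n) hC fun k hk => ?_
      calc ‖coeff k φ * coeff n (ψ ^ k)‖ * r ^ n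
          = ‖coeff k φ‖ * (‖coeff n (ψ ^ k)‖ * r ^ n) := by rw [norm_mul, mul_assoc]
        _ ≤ ‖coeff k φ‖ * r ^ k := by gcongr; exact norm_coeff_pow_mul_pow_le hr hψ k n
        _ ≤ C := ih k (mem_range.mp hk)
    calc ‖coeff n φ‖ * r ^ n = ‖coeff n φ * coeff 1 ψ ^ n‖ * r ^ n := by
          rw [norm_mul, norm_pow, hψ1, one_pow, mul_one]
      _ ≤ max ‖coeff n (comp φ ψ)‖ ‖∑ k ∈ range n, coeff k φ * coeff n (ψ ^ k)‖ * r ^ n := by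
          rw [hsolve]
          gcongr
          exact IsUltrametricDist.norm_sub_le_max _ _
      _ ≤ C := by
          rw [max_mul_of_nonneg _ _ (pow_nonneg hr.le n)]
          exact max_le (hχ n) hlower

end Ultrametric

end NA

theorem radius_of_convergence_ge_size_general
    {K : Type*} [NontriviallyNormedField K] [IsUltrametricDist K]
    (φ : PowerSeries K)
    (hc1 : ‖PowerSeries.coeff 1 φ‖ ≤ 1)
    (r : ℝ) (hr : r ∈ Set.Ioc (0 : ℝ) 1) (htriv : NA.GraphTrivAt φ r)
    (s : ℝ) (hs0 : 0 < s) (hsr : s < r) :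
    Filter.Tendsto (fun i : ℕ => ‖PowerSeries.coeff i φ‖ * s ^ i)
      Filter.atTop (nhds 0) := by
  obtain ⟨f₁, f₂, hf₁0, -, hf₁, hf₂, ha, hb, -, hd, hdet, hgraph⟩ := htriv
  have hψ0 : constantCoeff (NA.line1 f₁) = 0 := by rwa [NA.constantCoeff_line1]
  have hψ1 : ‖coeff 1 (NA.line1 f₁)‖ = 1 := by
    have hc : MvPowerSeries.coeff (Finsupp.single 0 1) f₂ =
        coeff 1 φ * MvPowerSeries.coeff (Finsupp.single 0 1) f₁ := by
      rw [← NA.coeff_line1, hgraph, NA.coeff_one_comp φ hψ0, NA.coeff_line1]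
    rw [hc] at hdet
    rw [NA.coeff_line1]
    exact NA.norm_eq_one_of_norm_det_eq_one ha hb hd hc1 hdet
  have hφ : ∀ n, ‖coeff n φ‖ * r ^ n ≤ r :=
    NA.norm_coeff_mul_pow_le_of_comp hr.1 hψ0 hψ1 (NA.norm_coeff_line1_mul_pow_le hf₁)
      (hgraph ▸ NA.norm_coeff_line1_mul_pow_le hf₂)
  exact tendsto_norm_coeff_mul_pow hs0.le hsr hφ

/-- **Proposition 3.6, part 1** (Bost–Chambert-Loir): over a complete discretely valued
nonarchimedean field `K` with valuation ring `R`, if `φ ∈ K⟦X⟧` has zero constant term and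
`φ'(0) ∈ R`, and if `r ∈ (0,1]` is a radius at which the graph of `φ` is analytically
trivialized, then the radius of convergence of `φ` is at least `r`: for every `s` with
`0 < s < r`, `‖c_i‖ s^i → 0` as `i → ∞`. -/
theorem radius_of_convergence_ge_size
    {K : Type*} [NontriviallyNormedField K] [CompleteSpace K] [IsUltrametricDist K]
    [IsDiscreteValuationRing (NA.integers K)]
    (φ : PowerSeries K) (hφ0 : PowerSeries.constantCoeff φ = 0)
    (hc1 : ‖PowerSeries.coeff 1 φ‖ ≤ 1)
    (r : ℝ) (hr : r ∈ Set.Ioc (0 : ℝ) 1) (htriv : NA.GraphTrivAt φ r)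
    (s : ℝ) (hs0 : 0 < s) (hsr : s < r) :
    Filter.Tendsto (fun i : ℕ => ‖PowerSeries.coeff i φ‖ * s ^ i)
      Filter.atTop (nhds 0) :=
  radius_of_convergence_ge_size_general φ hc1 r hr htriv s hs0 hsr
end
end

section
/- Let K be a field complete with respect to a nontrivial non-archimedean absolute value, with valuation ring R a discrete valuation ring. Let a ∈ K with 0 < |a| ≤ 1, and let φ = Σ_{i≥1} a^{−i} X^i ∈ K⟦X⟧ (the Taylor series at 0 of T/(a−T)). Then the radius of convergence of φ equals |a|, while the graph of φ is analytically trivialized at radius 1 (so the supremum of the trivialization radii equals 1). In particular, when |a| < 1 the size of the graph of a power series can be strictly larger than its radius of convergence when the assumption φ'(0) ∈ R is omitted. -/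
noncomputable section

open Filter PowerSeries

/-!
Since `|a| ≤ 1`, the compositional inverse `ψ = aX/(1+X)` of `φ = (X/a)/(1 - X/a)` has integral
coefficients, so the shear `(ψ(X₀) + X₁, X₀)` has Jacobian in `GL₂(R)`, norm `≤ 1` at radius `1`,
and maps the line `X₁ = 0` onto the graph of `φ`. The radius of convergence is read off from
`|a⁻ⁱ| sⁱ = (s/|a|)ⁱ`.
-/

open Topology
open scoped PowerSeries

namespace NA

variable {K : Type*}

theorem comp_smul_right [CommSemiring K] (φ ψ : K⟦X⟧) (a : K) :
    comp φ (a • ψ) = comp (rescale a φ) ψ := by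
  ext n
  simp only [comp, coeff_mk, coeff_rescale, smul_pow, map_smul, smul_eq_mul, mul_assoc]
  exact Finset.sum_congr rfl fun k _ => mul_left_comm _ _ _

def xDivOneAddX (K : Type*) [Ring K] : K⟦X⟧ :=
  PowerSeries.mk fun n => if n = 0 then 0 else (-1 : K) ^ (n - 1)

theorem X_mul_one_sub_xDivOneAddX [CommRing K] :
    X * (1 - xDivOneAddX K) = xDivOneAddX K := by
  ext (_ | _ | m) <;> simp [xDivOneAddX, coeff_succ_X_mul, pow_succ]

theorem constantCoeff_xDivOneAddX [CommRing K] : constantCoeff (xDivOneAddX K) = 0 :=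
  X_dvd_iff.mp ⟨_, X_mul_one_sub_xDivOneAddX.symm⟩

theorem coeff_X_mul_xDivOneAddX_pow_self [CommRing K] (n : ℕ) :
    coeff n (X * xDivOneAddX K ^ n) = 0 := by
  have hdvd : (X : K⟦X⟧) ^ (n + 1) ∣ X * xDivOneAddX K ^ n := by
    rw [pow_succ']
    exact mul_dvd_mul_left X (pow_dvd_pow_of_dvd ⟨_, X_mul_one_sub_xDivOneAddX.symm⟩ n)
  exact X_pow_dvd_iff.mp hdvd n n.lt_succ_self

theorem comp_xDivOneAddX_of_coeff_eq_one [CommRing K] (g : K⟦X⟧)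
    (hg₀ : constantCoeff g = 0) (hg : ∀ i, 1 ≤ i → coeff i g = 1) :
    comp g (xDivOneAddX K) = X := by
  set σ := xDivOneAddX K
  have hgeom (n : ℕ) : ∑ k ∈ Finset.range n, σ ^ (k + 1) = X - X * σ ^ n := by
    calc ∑ k ∈ Finset.range n, σ ^ (k + 1) = σ * ∑ k ∈ Finset.range n, σ ^ k := by
          simp only [Finset.mul_sum, pow_succ']
      _ = X * ((1 - σ) * ∑ k ∈ Finset.range n, σ ^ k) := by
          rw [← mul_assoc, X_mul_one_sub_xDivOneAddX]
      _ = X - X * σ ^ n := by rw [mul_neg_geom_sum, mul_sub, mul_one]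
  ext n
  rw [comp, coeff_mk, Finset.sum_range_succ', coeff_zero_eq_constantCoeff_apply, hg₀, zero_mul,
    add_zero]
  simp only [hg _ (Nat.succ_pos _), one_mul]
  rw [← map_sum, hgeom, map_sub, coeff_X_mul_xDivOneAddX_pow_self, sub_zero]

theorem norm_coeff_xDivOneAddX_le [NormedField K] (n : ℕ) : ‖coeff n (xDivOneAddX K)‖ ≤ 1 := by
  rw [xDivOneAddX, coeff_mk]
  split_ifs <;> simp

def inFirstVar [CommSemiring K] (g : K⟦X⟧) : MvPowerSeries (Fin 2) K :=
  fun I => if I 1 = 0 then coeff (I 0) g else 0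

theorem coeff_inFirstVar [CommSemiring K] (g : K⟦X⟧) (I : Fin 2 →₀ ℕ) :
    MvPowerSeries.coeff I (inFirstVar g) = if I 1 = 0 then coeff (I 0) g else 0 :=
  rfl

theorem constantCoeff_inFirstVar [CommSemiring K] (g : K⟦X⟧) :
    MvPowerSeries.constantCoeff (inFirstVar g) = constantCoeff g := by
  rw [← MvPowerSeries.coeff_zero_eq_constantCoeff_apply, coeff_inFirstVar,
    ← coeff_zero_eq_constantCoeff_apply]
  simp

theorem line1_add [CommSemiring K] (f g : MvPowerSeries (Fin 2) K) :
    line1 (f + g) = line1 f + line1 g := by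
  ext n
  simp [line1]

theorem line1_inFirstVar [CommSemiring K] (g : K⟦X⟧) : line1 (inFirstVar g) = g := by
  ext n
  simp [line1, coeff_inFirstVar]

theorem line1_X_zero [CommSemiring K] :
    line1 (MvPowerSeries.X 0 : MvPowerSeries (Fin 2) K) = X := by
  ext n
  simp [line1, MvPowerSeries.coeff_X, coeff_X, Finsupp.single_eq_single_iff]

theorem line1_X_one [CommSemiring K] :
    line1 (MvPowerSeries.X 1 : MvPowerSeries (Fin 2) K) = 0 := by
  ext n
  simp [line1, MvPowerSeries.coeff_X, Finsupp.single_eq_single_iff]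

theorem normLE_one_iff [NormedField K] {N : ℕ} (f : MvPowerSeries (Fin N) K) :
    NormLE 1 f 1 ↔ ∀ I, ‖MvPowerSeries.coeff I f‖ ≤ 1 := by
  simp [NormLE]

theorem graphTrivAt_one_of_comp_eq_X [NormedField K] (φ ψ : K⟦X⟧)
    (hψ₀ : constantCoeff ψ = 0) (hψ : ∀ n, ‖coeff n ψ‖ ≤ 1) (hcomp : comp φ ψ = X) :
    GraphTrivAt φ 1 := by
  refine ⟨inFirstVar ψ + MvPowerSeries.X 1, MvPowerSeries.X 0, ?_, ?_, ?_, ?_, ?_, ?_, ?_, ?_,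
    ?_, ?_⟩
  · simp [constantCoeff_inFirstVar, hψ₀]
  · simp
  · refine (normLE_one_iff _).mpr fun I => ?_
    rw [map_add, coeff_inFirstVar, MvPowerSeries.coeff_X]
    by_cases hI : I 1 = 0
    · have hI' : I ≠ Finsupp.single 1 1 := fun h => by simp [h] at hI
      simpa [hI, hI'] using hψ (I 0)
    · simp only [hI, if_false, zero_add]
      split_ifs <;> simp
  · refine (normLE_one_iff _).mpr fun I => ?_
    rw [MvPowerSeries.coeff_X]
    split_ifs <;> simp
  · simpa [coeff_inFirstVar, MvPowerSeries.coeff_X, Finsupp.single_eq_single_iff] using hψ 1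
  · simp [coeff_inFirstVar, MvPowerSeries.coeff_X]
  · simp [MvPowerSeries.coeff_X]
  · simp [MvPowerSeries.coeff_X, Finsupp.single_eq_single_iff]
  · simp [coeff_inFirstVar, MvPowerSeries.coeff_X, Finsupp.single_eq_single_iff]
  · rw [line1_X_zero, line1_add, line1_inFirstVar, line1_X_one, add_zero, hcomp]

theorem setOf_tendsto_mul_pow_eq_Ico {c : ℕ → ℝ} {ρ : ℝ} (hρ : 0 < ρ)
    (hc : ∀ᶠ i in atTop, c i = ρ⁻¹ ^ i) :
    {s : ℝ | 0 ≤ s ∧ Tendsto (fun i => c i * s ^ i) atTop (𝓝 0)} = Set.Ico 0 ρ := by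
  ext s
  have hgeom : Tendsto (fun i => c i * s ^ i) atTop (𝓝 0) ↔
      Tendsto (fun i : ℕ => (s / ρ) ^ i) atTop (𝓝 0) :=
    tendsto_congr' (hc.mono fun i hi => by
      show c i * s ^ i = (s / ρ) ^ i
      rw [hi, div_pow, div_eq_inv_mul, inv_pow])
  simp only [Set.mem_ofPred_eq, Set.mem_Ico, hgeom, tendsto_pow_atTop_nhds_zero_iff]
  constructor
  · rintro ⟨hs, hlt⟩
    exact ⟨hs, (div_lt_one hρ).mp (abs_of_nonneg (div_nonneg hs hρ.le) ▸ hlt)⟩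
  · rintro ⟨hs, hlt⟩
    exact ⟨hs, by rwa [abs_of_nonneg (div_nonneg hs hρ.le), div_lt_one hρ]⟩

end NA

theorem size_graph_gt_radius_example_general
    {K : Type*} [NontriviallyNormedField K]
    (a : K) (ha0 : 0 < ‖a‖) (ha1 : ‖a‖ ≤ 1)
    (φ : PowerSeries K) (hφ0 : PowerSeries.constantCoeff φ = 0)
    (hφ : ∀ i : ℕ, 1 ≤ i → PowerSeries.coeff i φ = a⁻¹ ^ i) :
    sSup {s : ℝ | 0 ≤ s ∧
        Filter.Tendsto (fun i : ℕ => ‖PowerSeries.coeff i φ‖ * s ^ i)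
          Filter.atTop (nhds 0)} = ‖a‖ ∧
      NA.GraphTrivAt φ 1 ∧
      sSup {r : ℝ | r ∈ Set.Ioc (0 : ℝ) 1 ∧ NA.GraphTrivAt φ r} = 1 := by
  have ha : a ≠ 0 := norm_pos_iff.mp ha0
  have hnorm : ∀ᶠ i in atTop, ‖coeff i φ‖ = ‖a‖⁻¹ ^ i :=
    (eventually_ge_atTop 1).mono fun i hi => by rw [hφ i hi, norm_pow, norm_inv]
  have hcomp : NA.comp φ (a • NA.xDivOneAddX K) = X := by
    rw [NA.comp_smul_right]
    refine NA.comp_xDivOneAddX_of_coeff_eq_one _ ?_ fun i hi => ?_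
    · rw [← coeff_zero_eq_constantCoeff_apply, coeff_rescale, coeff_zero_eq_constantCoeff_apply,
        hφ0, mul_zero]
    · rw [coeff_rescale, hφ i hi, ← mul_pow, mul_inv_cancel₀ ha, one_pow]
  have htriv : NA.GraphTrivAt φ 1 := by
    refine NA.graphTrivAt_one_of_comp_eq_X φ _ ?_ (fun n => ?_) hcomp
    · rw [constantCoeff_smul, NA.constantCoeff_xDivOneAddX, smul_zero]
    · rw [map_smul, smul_eq_mul, norm_mul]
      exact mul_le_one₀ ha1 (norm_nonneg _) (NA.norm_coeff_xDivOneAddX_le n)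
  refine ⟨?_, htriv, ?_⟩
  · rw [NA.setOf_tendsto_mul_pow_eq_Ico ha0 hnorm]
    exact csSup_Ico ha0
  · exact IsGreatest.csSup_eq ⟨⟨⟨zero_lt_one, le_rfl⟩, htriv⟩, fun r hr => hr.1.2⟩

/-- **Size can exceed the radius of convergence when `φ'(0) ∉ R`**: over a complete
discretely valued nonarchimedean field `K`, let `a ∈ K` with `0 < ‖a‖ ≤ 1` and let
`φ = Σ_{i≥1} a^{-i} X^i` (the Taylor series at `0` of `T/(a − T)`). Then the radius of
convergence of `φ` equals `‖a‖`, while the graph of `φ` is analytically trivialized at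
radius `1`, so the supremum of the trivialization radii `r ∈ (0,1]` equals `1`. -/
theorem size_graph_gt_radius_example
    {K : Type*} [NontriviallyNormedField K] [CompleteSpace K] [IsUltrametricDist K]
    [IsDiscreteValuationRing (NA.integers K)]
    (a : K) (ha0 : 0 < ‖a‖) (ha1 : ‖a‖ ≤ 1)
    (φ : PowerSeries K) (hφ0 : PowerSeries.constantCoeff φ = 0)
    (hφ : ∀ i : ℕ, 1 ≤ i → PowerSeries.coeff i φ = a⁻¹ ^ i) :
    sSup {s : ℝ | 0 ≤ s ∧
        Filter.Tendsto (fun i : ℕ => ‖PowerSeries.coeff i φ‖ * s ^ i)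
          Filter.atTop (nhds 0)} = ‖a‖ ∧
      NA.GraphTrivAt φ 1 ∧
      sSup {r : ℝ | r ∈ Set.Ioc (0 : ℝ) 1 ∧ NA.GraphTrivAt φ r} = 1 :=
  size_graph_gt_radius_example_general a ha0 ha1 φ hφ0 hφ
end
end

section
/- Let S be a nonempty finite set and let Q : S × S → ℝ be a symmetric matrix such that Q(s,t) ≥ 0 whenever s ≠ t. Assume there exists m : S → ℝ with m(s) > 0 for all s ∈ S and Σ_{s∈S} m(s)·Q(s,t) = 0 for every t ∈ S. Let T ⊆ S, and assume that every nonempty subset C of S satisfying Q(s,t) = 0 for all s ∈ C and all t ∈ S∖C contains at least one element not belonging to T. Let d : S → ℝ satisfy d(t) ≥ 0 for every t ∈ T, and let c : S → ℝ satisfy c(s) = 0 for every s ∉ T and Σ_{s∈S} c(s)·Q(s,t) = −d(t) for every t ∈ T. Then c(s) ≥ 0 for all s ∈ S. -/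
/-!
Look at the minimum of `c / m`. If it were negative, every point `t` where it is attained
would lie in `T`, so `Σ_s c(s) Q(s,t) ≤ 0`; subtracting `min · Σ_s m(s) Q(s,t) = 0` turns this
into a sum of nonnegative terms, forcing `Q(s,t) = 0` for every `s` off the minimum set. The
minimum set would then be a nonempty `Q`-isolated subset of `T`, which the connectivity hypothesis forbids.
-/

open Finset

theorem eq_zero_of_isMin_div_of_sum_mul_nonpos {S : Type*} [Fintype S] {Q : S → S → ℝ} {t : S}
    (hoff : ∀ s, s ≠ t → 0 ≤ Q s t) {m : S → ℝ} (hm : ∀ s, 0 < m s)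
    (hker : ∑ s, m s * Q s t = 0) {c : S → ℝ} (hmin : ∀ s, c t / m t ≤ c s / m s)
    (hsum : ∑ s, c s * Q s t ≤ 0) {s : S} (hs : c s / m s ≠ c t / m t) :
    Q s t = 0 := by
  have hshift : ∑ s, (c s / m s - c t / m t) * m s * Q s t = ∑ s, c s * Q s t := by
    simp only [sub_mul, sum_sub_distrib, div_mul_cancel₀ _ (hm _).ne', mul_assoc, ← mul_sum,
      hker, mul_zero, sub_zero]
  have hnonneg : ∀ x ∈ univ, 0 ≤ (c x / m x - c t / m t) * m x * Q x t := by
    intro x _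
    rcases eq_or_ne x t with rfl | hxt
    · simp
    · exact mul_nonneg (mul_nonneg (sub_nonneg.2 (hmin x)) (hm x).le) (hoff x hxt)
  have hzero := (sum_eq_zero_iff_of_nonneg hnonneg).1
    (le_antisymm (hshift ▸ hsum) (sum_nonneg hnonneg)) s (mem_univ s)
  simpa [sub_eq_zero, hs, (hm s).ne'] using hzero

theorem discrete_maximum_principle_general
    {S : Type*} [Fintype S]
    (Q : S → S → ℝ)
    (hsym : ∀ s t, Q s t = Q t s)
    (hoff : ∀ s t, s ≠ t → 0 ≤ Q s t)
    (m : S → ℝ) (hm : ∀ s, 0 < m s)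
    (hker : ∀ t, ∑ s, m s * Q s t = 0)
    (T : Set S)
    (hconn : ∀ C : Set S, C.Nonempty → (∀ s ∈ C, ∀ t ∉ C, Q s t = 0) → ∃ s ∈ C, s ∉ T)
    (d : S → ℝ) (hd : ∀ t ∈ T, 0 ≤ d t)
    (c : S → ℝ) (hc0 : ∀ s ∉ T, c s = 0)
    (hceq : ∀ t ∈ T, ∑ s, c s * Q s t = -d t) :
    ∀ s, 0 ≤ c s := by
  by_contra! ⟨s₁, hs₁⟩
  have : Nonempty S := ⟨s₁⟩
  obtain ⟨s₀, hs₀⟩ := Finite.exists_min fun s => c s / m s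
  have hneg : c s₀ / m s₀ < 0 := (hs₀ s₁).trans_lt (div_neg_of_neg_of_pos hs₁ (hm s₁))
  set C : Set S := {s | c s / m s = c s₀ / m s₀}
  have hCT : ∀ s ∈ C, s ∈ T := fun s hs => by
    by_contra hsT
    simp only [C, Set.mem_ofPred_eq, hc0 s hsT, zero_div] at hs
    exact hneg.ne' hs
  obtain ⟨s, hsC, hsT⟩ := hconn C ⟨s₀, rfl⟩ fun s hs t ht => by
    rw [hsym]
    exact eq_zero_of_isMin_div_of_sum_mul_nonpos (hoff · s) hm (hker s) (fun x => hs ▸ hs₀ x)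
      ((hceq s (hCT s hs)).trans_le (neg_nonpos.2 (hd s (hCT s hs)))) (hs ▸ ht)
  exact hsT (hCT s hsC)

/-- **Discrete maximum principle** (combinatorial core of Proposition 5.1 of
Bost–Chambert-Loir): let `S` be a nonempty finite set, `Q : S × S → ℝ` a symmetric matrix
with nonnegative off-diagonal entries admitting a strictly positive vector `m` in its
kernel (`Σ_s m(s) Q(s,t) = 0` for all `t`). Let `T ⊆ S` be such that every nonempty
"connected component for `Q`" (a nonempty `C ⊆ S` with `Q(s,t) = 0` whenever `s ∈ C`,
`t ∉ C`) contains an element outside `T`. If `d : S → ℝ` is nonnegative on `T` and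
`c : S → ℝ` vanishes outside `T` and satisfies `Σ_s c(s) Q(s,t) = −d(t)` for all `t ∈ T`,
then `c` is nonnegative everywhere. -/
theorem discrete_maximum_principle
    {S : Type*} [Fintype S] [Nonempty S]
    (Q : S → S → ℝ)
    (hsym : ∀ s t, Q s t = Q t s)
    (hoff : ∀ s t, s ≠ t → 0 ≤ Q s t)
    (m : S → ℝ) (hm : ∀ s, 0 < m s)
    (hker : ∀ t, ∑ s, m s * Q s t = 0)
    (T : Set S)
    (hconn : ∀ C : Set S, C.Nonempty → (∀ s ∈ C, ∀ t ∉ C, Q s t = 0) → ∃ s ∈ C, s ∉ T)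
    (d : S → ℝ) (hd : ∀ t ∈ T, 0 ≤ d t)
    (c : S → ℝ) (hc0 : ∀ s ∉ T, c s = 0)
    (hceq : ∀ t ∈ T, ∑ s, c s * Q s t = -d t) :
    ∀ s, 0 ≤ c s :=
  discrete_maximum_principle_general Q hsym hoff m hm hker T hconn d hd c hc0 hceq
end
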